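/- arXiv:math/0406086 — 6 statements merged into one kernel-verified Lean document; each statement's English description precedes it below -/
import Mathlib

section
/- For all natural numbers n and all real numbers x, the alternating sum ∑_{i=0}^{n} (-1)^i * C(n,i) * (x - i)^n equals n!. -/
open Finset in
lemma aux_diff (n : ℕ) : ∀ (k : ℕ) (x : ℝ), k ≤ n →
    ∑ i ∈ Finset.range (n+1), (-1:ℝ)^i * (n.choose i) * (x - i)^k
      = if k = n then (n.factorial : ℝ) else 0 := by
  induction n with
  | zero =>
    intro k x hk
    interval_cases k
    simp
  | succ n ih =>
    intro k x hk
    have key : ∑ i ∈ Finset.range (n+2), (-1:ℝ)^i * ((n+1).choose i) * (x - i)^k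
        = (∑ i ∈ Finset.range (n+1), (-1:ℝ)^i * (n.choose i) * (x - i)^k)
          - ∑ i ∈ Finset.range (n+1), (-1:ℝ)^i * (n.choose i) * ((x-1) - i)^k := by
      rw [Finset.sum_range_succ' (fun i => (-1:ℝ)^i * ((n+1).choose i) * (x - i)^k)]
      have h1 : ∀ i, (-1:ℝ)^(i+1) * ((n+1).choose (i+1)) * (x - (i+1:ℕ))^k
          = (-1:ℝ)^(i+1) * (n.choose (i+1)) * (x - (i+1:ℕ))^k
            + (-((-1:ℝ)^i * (n.choose i) * ((x-1) - i)^k)) := by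
        intro i
        rw [Nat.choose_succ_succ']
        push_cast
        ring
      rw [Finset.sum_congr rfl (fun i _ => h1 i), Finset.sum_add_distrib]
      have h2 : (∑ i ∈ Finset.range (n+1), (-1:ℝ)^(i+1) * (n.choose (i+1)) * (x - (i+1:ℕ))^k)
          + (-1:ℝ)^0 * ((n+1).choose 0) * (x - (0:ℕ))^k
          = ∑ i ∈ Finset.range (n+2), (-1:ℝ)^i * (n.choose i) * (x - i)^k := by
        rw [Finset.sum_range_succ' (fun i => (-1:ℝ)^i * (n.choose i) * (x - i)^k)]
        simp
      have h3 : ∑ i ∈ Finset.range (n+2), (-1:ℝ)^i * (n.choose i) * (x - i)^k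
          = ∑ i ∈ Finset.range (n+1), (-1:ℝ)^i * (n.choose i) * (x - i)^k := by
        rw [Finset.sum_range_succ]
        simp
      rw [add_right_comm, h2, h3, Finset.sum_neg_distrib]
      ring
    rcases Nat.lt_or_ge k (n+1) with hlt | hge
    · have hk' : k ≤ n := Nat.lt_succ_iff.mp hlt
      rw [key, ih k x hk', ih k (x-1) hk']
      simp [Nat.ne_of_lt hlt]
    · have hk1 : k = n + 1 := le_antisymm hk hge
      subst hk1
      rw [key]
      have expand : ∀ y : ℝ, y^(n+1) - (y-1)^(n+1)
          = ∑ j ∈ Finset.range (n+1), ((n+1).choose j : ℝ) * (y-1)^j := by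
        intro y
        have hy : y ^ (n+1) = ((y-1) + 1) ^ (n+1) := by ring_nf
        rw [hy, add_pow]
        rw [Finset.sum_range_succ]
        simp only [Nat.choose_self, Nat.cast_one, mul_one, one_pow,
          Nat.sub_self, pow_zero, add_sub_cancel_right]
        exact Finset.sum_congr rfl fun j _ => mul_comm _ _
      rw [← Finset.sum_sub_distrib]
      have step : ∀ i ∈ Finset.range (n+1),
          (-1:ℝ)^i * (n.choose i) * (x - i)^(n+1)
            - (-1:ℝ)^i * (n.choose i) * ((x-1) - i)^(n+1)
          = ∑ j ∈ Finset.range (n+1),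
              ((n+1).choose j : ℝ) * ((-1:ℝ)^i * (n.choose i) * ((x-1) - i)^j) := by
        intro i _
        have hb : (x - 1) - (i:ℝ) = (x - (i:ℝ)) - 1 := by ring
        rw [hb]
        rw [Finset.sum_congr rfl (fun j _ => by ring :
          ∀ j ∈ Finset.range (n+1),
            ((n+1).choose j : ℝ) * ((-1:ℝ)^i * (n.choose i) * ((x - (i:ℝ)) - 1)^j)
              = ((-1:ℝ)^i * (n.choose i)) * (((n+1).choose j : ℝ) * ((x - (i:ℝ)) - 1)^j)),
          ← Finset.mul_sum, ← expand (x - i)]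
        ring
      rw [Finset.sum_congr rfl step, Finset.sum_comm]
      have inner : ∀ j ∈ Finset.range (n+1),
          ∑ i ∈ Finset.range (n+1),
              ((n+1).choose j : ℝ) * ((-1:ℝ)^i * (n.choose i) * ((x-1) - i)^j)
          = ((n+1).choose j : ℝ) * (if j = n then (n.factorial : ℝ) else 0) := by
        intro j hj
        rw [← Finset.mul_sum, ih j (x-1) (Nat.lt_succ_iff.mp (Finset.mem_range.mp hj))]
      rw [Finset.sum_congr rfl inner]
      rw [Finset.sum_eq_single_of_mem n (Finset.self_mem_range_succ n)
        (fun j _ hj => by simp [hj])]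
      simp [Nat.choose_succ_self_right, Nat.factorial_succ]

theorem stmt0 (n : ℕ) (x : ℝ) :
    ∑ i ∈ Finset.range (n+1), (-1:ℝ)^i * (n.choose i) * (x - i)^n = n.factorial := by
  have := aux_diff n n x le_rfl
  simpa using this
end

section
/- For every natural number n, ∑_{i=0}^{n} (-1)^i * C(n,i) * (n - i)^n = n!, where the sum is in ℤ. -/
open Finset Function fwdDiff

private lemma fwd_pow (m : ℕ) :
    fwdDiff 1 (fun x : ℕ ↦ (x : ℤ)^m) = ∑ j ∈ range m, fun x : ℕ ↦ (m.choose j : ℤ) * (x : ℤ)^j := by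
  ext x
  simp only [fwdDiff, Finset.sum_apply]
  push_cast
  rw [add_pow]
  rw [Finset.sum_range_succ]
  simp [mul_comm]

private lemma fwd_pow_lt : ∀ n m : ℕ, m < n →
    (fwdDiff 1)^[n] (fun x : ℕ ↦ (x : ℤ)^m) = fun _ ↦ 0 := by
  intro n
  induction n with
  | zero => omega
  | succ n IH =>
    intro m hm
    rw [Function.iterate_succ_apply, fwd_pow, fwdDiff_iter_finset_sum]
    have : ∀ j ∈ range m, (fwdDiff 1)^[n] (fun x : ℕ ↦ (m.choose j : ℤ) * (x : ℤ)^j) = fun _ ↦ 0 := by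
      intro j hj
      have h1 : (fun x : ℕ ↦ (m.choose j : ℤ) * (x : ℤ)^j)
          = (m.choose j : ℤ) • (fun x : ℕ ↦ (x : ℤ)^j) := by ext x; simp
      rw [h1, fwdDiff_iter_const_smul, IH j (by have := mem_range.mp hj; omega)]
      ext x; simp
    rw [Finset.sum_congr rfl this]
    ext x; simp

private lemma fwd_pow_diag : ∀ n : ℕ,
    (fwdDiff 1)^[n] (fun x : ℕ ↦ (x : ℤ)^n) = fun _ ↦ (n.factorial : ℤ) := by
  intro n
  induction n with
  | zero => ext x; simp
  | succ n IH =>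
    rw [Function.iterate_succ_apply, fwd_pow, fwdDiff_iter_finset_sum,
      Finset.sum_range_succ]
    have h1 : (fun x : ℕ ↦ ((n+1).choose n : ℤ) * (x : ℤ)^n)
        = ((n+1).choose n : ℤ) • (fun x : ℕ ↦ (x : ℤ)^n) := by ext x; simp
    have h2 : ∀ j ∈ range n, (fwdDiff 1)^[n] (fun x : ℕ ↦ ((n+1).choose j : ℤ) * (x : ℤ)^j)
        = fun _ ↦ 0 := by
      intro j hj
      have h3 : (fun x : ℕ ↦ ((n+1).choose j : ℤ) * (x : ℤ)^j)
          = ((n+1).choose j : ℤ) • (fun x : ℕ ↦ (x : ℤ)^j) := by ext x; simp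
      rw [h3, fwdDiff_iter_const_smul, fwd_pow_lt n j (mem_range.mp hj)]
      ext x; simp
    rw [Finset.sum_congr rfl h2, h1, fwdDiff_iter_const_smul, IH]
    ext x
    simp [Nat.choose_succ_self_right, Nat.factorial_succ]

theorem stmt10 (n : ℕ) :
    ∑ i ∈ Finset.range (n+1), (-1:ℤ)^i * (n.choose i) * ((n:ℤ) - i)^n = n.factorial := by
  have key := fwdDiff_iter_eq_sum_shift (1 : ℕ) (fun x : ℕ ↦ (x : ℤ)^n) n 0
  rw [congrFun (fwd_pow_diag n) 0] at key
  rw [← Finset.sum_range_reflect]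
  rw [key]
  apply Finset.sum_congr rfl
  intro i hi
  have hin : i ≤ n := by have := mem_range.mp hi; omega
  have h1 : n + 1 - 1 - i = n - i := by omega
  rw [h1, Nat.choose_symm hin]
  have h2 : n - (n - i) = i := by omega
  have h3 : ((n : ℤ) - ((n - i : ℕ) : ℤ)) = (i : ℤ) := by
    push_cast [Nat.cast_sub hin]; ring
  rw [h3]
  simp [zsmul_eq_mul]
end

section
/- For every natural number n, ∑_{i=0}^{n} (-1)^i * C(n,i) * i^n = (-1)^n * n!, where the sum is in ℤ. -/
open Finset

lemma key : ∀ n : ℕ, ∀ k ≤ n, ∑ i ∈ Finset.range (n+1), (-1:ℤ)^i * (n.choose i) * (i:ℤ)^k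
    = if k = n then (-1:ℤ)^n * (n.factorial : ℤ) else 0 := by
  intro n
  induction n with
  | zero => intro k hk; interval_cases k; norm_num
  | succ n IH =>
    intro k hk
    set S : ℕ → ℤ := fun m => ∑ i ∈ Finset.range (n+1), (-1:ℤ)^i * (n.choose i) * (i:ℤ)^m with hS
    have h2 : ∑ j ∈ Finset.range (n+1), (-1:ℤ)^(j+1) * (n.choose (j+1)) * ((j:ℤ)+1)^k
        = S k - (0:ℤ)^k := by
      have e1 : ∑ i ∈ Finset.range (n+2), (-1:ℤ)^i * (n.choose i) * (i:ℤ)^k = S k := by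
        rw [Finset.sum_range_succ]
        simp [hS, Nat.choose_succ_self]
      have e2 : ∑ i ∈ Finset.range (n+2), (-1:ℤ)^i * (n.choose i) * (i:ℤ)^k
          = (∑ j ∈ Finset.range (n+1), (-1:ℤ)^(j+1) * (n.choose (j+1)) * ((j:ℤ)+1)^k)
            + (0:ℤ)^k := by
        rw [Finset.sum_range_succ']
        push_cast
        norm_num
      rw [e1] at e2
      linarith
    have h3 : ∑ j ∈ Finset.range (n+1), (-1:ℤ)^(j+1) * (n.choose j) * ((j:ℤ)+1)^k
        = - ∑ m ∈ Finset.range (k+1), (k.choose m : ℤ) * S m := by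
      have expand : ∀ j : ℕ, ((j:ℤ)+1)^k = ∑ m ∈ Finset.range (k+1), (j:ℤ)^m * (k.choose m) := by
        intro j
        simpa using add_pow (j:ℤ) 1 k
      calc ∑ j ∈ Finset.range (n+1), (-1:ℤ)^(j+1) * (n.choose j) * ((j:ℤ)+1)^k
          = ∑ j ∈ Finset.range (n+1), ∑ m ∈ Finset.range (k+1),
              -((k.choose m : ℤ) * ((-1:ℤ)^j * (n.choose j) * (j:ℤ)^m)) := by
            refine Finset.sum_congr rfl fun j _ => ?_
            rw [expand j, Finset.mul_sum]
            refine Finset.sum_congr rfl fun m _ => ?_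
            ring
        _ = - ∑ m ∈ Finset.range (k+1), (k.choose m : ℤ) * S m := by
            rw [Finset.sum_comm, ← Finset.sum_neg_distrib]
            refine Finset.sum_congr rfl fun m _ => ?_
            have : S m = ∑ i ∈ Finset.range (n+1), (-1:ℤ)^i * (n.choose i) * (i:ℤ)^m := rfl
            rw [this, Finset.mul_sum, ← Finset.sum_neg_distrib]
    have main : ∑ i ∈ Finset.range (n+2), (-1:ℤ)^i * ((n+1).choose i) * (i:ℤ)^k
        = - ∑ m ∈ Finset.range k, (k.choose m : ℤ) * S m := by
      rw [Finset.sum_range_succ']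
      have split : ∀ j ∈ Finset.range (n+1),
          (-1:ℤ)^(j+1) * (((n+1).choose (j+1) : ℕ) : ℤ) * ((j:ℤ)+1)^k
          = (-1:ℤ)^(j+1) * (n.choose j) * ((j:ℤ)+1)^k
            + (-1:ℤ)^(j+1) * (n.choose (j+1)) * ((j:ℤ)+1)^k := by
        intro j _
        rw [Nat.choose_succ_succ]
        push_cast
        ring
      have hsum : ∑ j ∈ Finset.range (n+1), (-1:ℤ)^(j+1) * (((n+1).choose (j+1):ℕ):ℤ) * ((j:ℤ)+1)^k
          = (∑ j ∈ Finset.range (n+1), (-1:ℤ)^(j+1) * (n.choose j) * ((j:ℤ)+1)^k)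
            + ∑ j ∈ Finset.range (n+1), (-1:ℤ)^(j+1) * (n.choose (j+1)) * ((j:ℤ)+1)^k := by
        rw [← Finset.sum_add_distrib]
        exact Finset.sum_congr rfl split
      push_cast
      push_cast at hsum
      rw [hsum, h2, h3, Finset.sum_range_succ]
      simp
      ring
    rw [main]
    have hval : ∀ m ∈ Finset.range k, (k.choose m : ℤ) * S m
        = if m = n then (k.choose m : ℤ) * ((-1:ℤ)^n * (n.factorial : ℤ)) else 0 := by
      intro m hm
      have hmn : m ≤ n := by
        have := Finset.mem_range.mp hm
        omega
      have : S m = ∑ i ∈ Finset.range (n+1), (-1:ℤ)^i * (n.choose i) * (i:ℤ)^m := rfl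
      rw [this, IH m hmn]
      split <;> simp
    rw [Finset.sum_congr rfl hval, Finset.sum_ite_eq' (Finset.range k) n]
    by_cases hk1 : k = n + 1
    · subst hk1
      rw [if_pos rfl, if_pos (Finset.mem_range.mpr (Nat.lt_succ_self n)),
        Nat.choose_succ_self_right, Nat.factorial_succ]
      push_cast
      ring
    · have : n ∉ Finset.range k := by
        simp only [Finset.mem_range]
        omega
      rw [if_neg this, if_neg hk1, neg_zero]

theorem stmt11 (n : ℕ) :
    ∑ i ∈ Finset.range (n+1), (-1:ℤ)^i * (n.choose i) * (i:ℤ)^n = (-1)^n * n.factorial := by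
  simpa using key n n le_rfl
end

section
/- For all natural numbers k and all real x, (k+1) * (∑_{i=0}^{k} (-1)^i C(k,i)(x-i)^k - ∑_{i=0}^{k} (-1)^i C(k,i)(x-1-i)^k) = 0, i.e., the derivative of f_{k+1} at x equals (k+1)(f_k(x) - f_k(x-1)). -/
/-! Differentiate term by term; Pascal's rule `C(k+1, i) = C(k, i) + C(k, i-1)` then splits the
alternating sum of level `k+1` into the level-`k` sum at `x` minus the same sum with every
node shifted by one, i.e. at `x - 1`. -/

open Finset

theorem sum_range_alternating_choose_succ_mul {R : Type*} [CommRing R] (n : ℕ) (a : ℕ → R) :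
    ∑ i ∈ range (n + 2), (-1) ^ i * ((n + 1).choose i : R) * a i
      = ∑ i ∈ range (n + 1), (-1) ^ i * (n.choose i : R) * (a i - a (i + 1)) := by
  have shift : ∑ i ∈ range (n + 1), (-1) ^ i * (n.choose i : R) * a i
      = ∑ i ∈ range (n + 1), (-1) ^ (i + 1) * (n.choose (i + 1) : R) * a (i + 1) + a 0 := by
    rw [sum_range_succ',
      sum_range_succ (fun i => (-1) ^ (i + 1) * (n.choose (i + 1) : R) * a (i + 1))]
    simp
  simp only [mul_sub, sum_sub_distrib]
  rw [sum_range_succ', shift]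
  simp only [Nat.choose_succ_succ, Nat.cast_add, mul_add, add_mul, sum_add_distrib, pow_succ,
    mul_neg_one, neg_mul, sum_neg_distrib, Nat.succ_eq_add_one, pow_zero, Nat.choose_zero_right,
    Nat.cast_one, mul_one]
  ring

theorem hasDerivAt_sum_mul_sub_pow_succ {𝕜 ι : Type*} [NontriviallyNormedField 𝕜]
    (s : Finset ι) (c t : ι → 𝕜) (n : ℕ) (x : 𝕜) :
    HasDerivAt (fun y => ∑ i ∈ s, c i * (y - t i) ^ (n + 1))
      (∑ i ∈ s, c i * ((n + 1) * (x - t i) ^ n)) x := by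
  refine HasDerivAt.fun_sum fun i _ => HasDerivAt.const_mul _ ?_
  simpa using ((hasDerivAt_id x).sub_const (t i)).fun_pow (n + 1)

theorem stmt14 (k : ℕ) (x : ℝ) :
    deriv (fun y : ℝ => ∑ i ∈ Finset.range (k+2), (-1:ℝ)^i * ((k+1).choose i) * (y - i)^(k+1)) x
      = (k+1) * ((∑ i ∈ Finset.range (k+1), (-1:ℝ)^i * (k.choose i) * (x - i)^k)
        - ∑ i ∈ Finset.range (k+1), (-1:ℝ)^i * (k.choose i) * (x - 1 - i)^k) := by
  rw [(hasDerivAt_sum_mul_sub_pow_succ _ (fun i => (-1 : ℝ) ^ i * ((k + 1).choose i))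
    (fun i => (i : ℝ)) k x).deriv, sum_range_alternating_choose_succ_mul, mul_sub, mul_sum,
    mul_sum, ← sum_sub_distrib]
  refine sum_congr rfl fun i _ => ?_
  push_cast
  ring
end

section
/- For all natural numbers k, ∑_{i=0}^{k+1} (-1)^i * C(k+1, i) * (k+1-i)^{k+1} = (k+1) * ∑_{i=0}^{k} (-1)^i * C(k, i) * (k+1-i)^k, in ℤ. -/
theorem stmt15 (k : ℕ) :
    ∑ i ∈ Finset.range (k+2), (-1:ℤ)^i * ((k+1).choose i) * ((k:ℤ)+1-i)^(k+1)
      = (k+1) * ∑ i ∈ Finset.range (k+1), (-1:ℤ)^i * (k.choose i) * ((k:ℤ)+1-i)^k := by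
  rw [Finset.mul_sum]
  have h : (∑ i ∈ Finset.range (k+1), ((k:ℤ)+1) * ((-1:ℤ)^i * (k.choose i) * ((k:ℤ)+1-i)^k))
      = ∑ i ∈ Finset.range (k+2), ((k:ℤ)+1) * ((-1:ℤ)^i * (k.choose i) * ((k:ℤ)+1-i)^k) := by
    rw [Finset.sum_range_succ (n := k+1)]
    simp [Nat.choose_succ_self]
  rw [h]
  apply Finset.sum_congr rfl
  intro i hi
  have hik : i ≤ k + 1 := by
    have := Finset.mem_range.mp hi; omega
  rcases eq_or_lt_of_le hik with heq | hlt
  · subst heq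
    have : (k:ℤ) + 1 - (k+1 : ℕ) = 0 := by push_cast; ring
    rw [this]
    simp [Nat.choose_succ_self]
  · -- i ≤ k
    have hik' : i ≤ k := by omega
    have hcast : (k:ℤ) + 1 - i = ((k + 1 - i : ℕ) : ℤ) := by
      push_cast [Nat.cast_sub (by omega : i ≤ k + 1)]; ring
    have hkey : ((k+1).choose i : ℤ) * ((k + 1 - i : ℕ) : ℤ) = ((k:ℤ)+1) * (k.choose i) := by
      have := Nat.choose_mul_succ_eq k i
      have : ((k.choose i * (k+1) : ℕ) : ℤ) = (((k+1).choose i * (k+1-i) : ℕ) : ℤ) := by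
        exact_mod_cast congrArg (fun n : ℕ => (n : ℤ)) this
      push_cast at this
      linarith
    calc (-1:ℤ)^i * ((k+1).choose i) * ((k:ℤ)+1-i)^(k+1)
        = (-1:ℤ)^i * (((k+1).choose i) * ((k:ℤ)+1-i)) * ((k:ℤ)+1-i)^k := by ring
      _ = (-1:ℤ)^i * (((k:ℤ)+1) * (k.choose i)) * ((k:ℤ)+1-i)^k := by
          rw [hcast] at *; rw [hkey]
      _ = ((k:ℤ)+1) * ((-1:ℤ)^i * (k.choose i) * ((k:ℤ)+1-i)^k) := by ring
end

section
/- For all natural numbers n and j with j ≤ n, and all real x, ∑_{i=0}^{n} (-1)^i * C(n,i) * (x - i)^j = if j = n then n! else 0. -/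
lemma auxT : ∀ n k : ℕ, k ≤ n →
    ∑ i ∈ Finset.range (n+1), (-1:ℝ)^i * (n.choose i) * (i:ℝ)^k
      = if k = n then (-1:ℝ)^n * n.factorial else 0 := by
  intro n
  induction n with
  | zero => intro k hk; interval_cases k; simp
  | succ n ih =>
    intro k hk
    have key : ∑ i ∈ Finset.range (n+1+1), (-1:ℝ)^i * ((n+1).choose i) * (i:ℝ)^k
        = (∑ i ∈ Finset.range (n+1), (-1:ℝ)^i * (n.choose i) * (i:ℝ)^k)
          - ∑ l ∈ Finset.range (k+1), (k.choose l : ℝ) *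
              ∑ i ∈ Finset.range (n+1), (-1:ℝ)^i * (n.choose i) * (i:ℝ)^l := by
      rw [Finset.sum_range_succ' (fun i => (-1:ℝ)^i * ((n+1).choose i) * (i:ℝ)^k)]
      have h1 : ∀ i, ((n+1).choose (i+1) : ℝ) = (n.choose i : ℝ) + (n.choose (i+1) : ℝ) := by
        intro i; rw [Nat.choose_succ_succ]; push_cast; ring
      have split : ∑ i ∈ Finset.range (n+1),
            (-1:ℝ)^(i+1) * ((n+1).choose (i+1)) * ((i:ℝ)+1)^k
          = (∑ i ∈ Finset.range (n+1), (-1:ℝ)^(i+1) * (n.choose (i+1)) * ((i:ℝ)+1)^k)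
            + ∑ i ∈ Finset.range (n+1), (-1:ℝ)^(i+1) * (n.choose i) * ((i:ℝ)+1)^k := by
        rw [← Finset.sum_add_distrib]
        refine Finset.sum_congr rfl fun i _ => ?_
        rw [h1]; ring
      push_cast
      rw [split]
      have hA : (∑ i ∈ Finset.range (n+1), (-1:ℝ)^(i+1) * (n.choose (i+1)) * ((i:ℝ)+1)^k)
            + (-1:ℝ)^0 * ((n+1).choose 0 : ℝ) * ((0:ℝ))^k
          = ∑ i ∈ Finset.range (n+1), (-1:ℝ)^i * (n.choose i) * (i:ℝ)^k := by
        have h2 := Finset.sum_range_succ' (fun i => (-1:ℝ)^i * (n.choose i) * (i:ℝ)^k) (n+1)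
        rw [Finset.sum_range_succ] at h2
        push_cast at h2 ⊢
        simp only [Nat.choose_succ_self, Nat.cast_zero, mul_zero, zero_mul, add_zero,
          Nat.choose_zero_right, Nat.cast_one] at h2 ⊢
        linarith [h2]
      have hB : ∑ i ∈ Finset.range (n+1), (-1:ℝ)^(i+1) * (n.choose i) * ((i:ℝ)+1)^k
          = - ∑ l ∈ Finset.range (k+1), (k.choose l : ℝ) *
              ∑ i ∈ Finset.range (n+1), (-1:ℝ)^i * (n.choose i) * (i:ℝ)^l := by
        have hexp : ∀ i : ℕ, ((i:ℝ)+1)^k = ∑ l ∈ Finset.range (k+1), (i:ℝ)^l * (k.choose l : ℝ) := by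
          intro i
          rw [add_pow]
          exact Finset.sum_congr rfl fun l _ => by simp
        calc ∑ i ∈ Finset.range (n+1), (-1:ℝ)^(i+1) * (n.choose i) * ((i:ℝ)+1)^k
            = ∑ i ∈ Finset.range (n+1), ∑ l ∈ Finset.range (k+1),
                (-1:ℝ)^(i+1) * (n.choose i) * ((i:ℝ)^l * (k.choose l : ℝ)) := by
              refine Finset.sum_congr rfl fun i _ => ?_
              rw [hexp, Finset.mul_sum]
          _ = ∑ l ∈ Finset.range (k+1), ∑ i ∈ Finset.range (n+1),
                (-1:ℝ)^(i+1) * (n.choose i) * ((i:ℝ)^l * (k.choose l : ℝ)) := Finset.sum_comm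
          _ = - ∑ l ∈ Finset.range (k+1), (k.choose l : ℝ) *
                ∑ i ∈ Finset.range (n+1), (-1:ℝ)^i * (n.choose i) * (i:ℝ)^l := by
              rw [← Finset.sum_neg_distrib]
              refine Finset.sum_congr rfl fun l _ => ?_
              rw [Finset.mul_sum, ← Finset.sum_neg_distrib]
              refine Finset.sum_congr rfl fun i _ => ?_
              ring
      push_cast at hA hB ⊢
      rw [hB]
      linarith [hA]
    rw [key]
    rcases Nat.lt_or_ge k (n+1) with hk' | hk'
    · -- k ≤ n
      have hkn : k ≤ n := Nat.lt_succ_iff.mp hk'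
      have hls : ∑ l ∈ Finset.range (k+1), (k.choose l : ℝ) *
              ∑ i ∈ Finset.range (n+1), (-1:ℝ)^i * (n.choose i) * (i:ℝ)^l
          = if k = n then (-1:ℝ)^n * n.factorial else 0 := by
        rw [Finset.sum_congr rfl (fun l hl => by
          rw [ih l (le_trans (Nat.lt_succ_iff.mp (Finset.mem_range.mp hl)) hkn)])]
        simp only [mul_ite, mul_zero]
        rw [Finset.sum_ite_eq' (Finset.range (k+1)) n
          (fun l => (k.choose l : ℝ) * ((-1:ℝ)^n * n.factorial))]
        by_cases h : k = n
        · subst h; simp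
        · have : n ∉ Finset.range (k+1) := by
            simp only [Finset.mem_range, Nat.lt_succ_iff]
            omega
          rw [if_neg this, if_neg h]
      rw [ih k hkn, hls]
      have : k ≠ n + 1 := by omega
      simp [this]
    · -- k = n+1
      have hk1 : k = n + 1 := le_antisymm hk hk'
      subst hk1
      have hls : ∑ l ∈ Finset.range (n+2), ((n+1).choose l : ℝ) *
              ∑ i ∈ Finset.range (n+1), (-1:ℝ)^i * (n.choose i) * (i:ℝ)^l
          = (∑ i ∈ Finset.range (n+1), (-1:ℝ)^i * (n.choose i) * (i:ℝ)^(n+1))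
            + (n+1) * ((-1:ℝ)^n * n.factorial) := by
        rw [Finset.sum_range_succ, Finset.sum_range_succ]
        have h0 : ∑ l ∈ Finset.range n, ((n+1).choose l : ℝ) *
              ∑ i ∈ Finset.range (n+1), (-1:ℝ)^i * (n.choose i) * (i:ℝ)^l = 0 := by
          refine Finset.sum_eq_zero fun l hl => ?_
          have hl' := Finset.mem_range.mp hl
          rw [ih l (Nat.le_of_lt hl'), if_neg (Nat.ne_of_lt hl'), mul_zero]
        rw [h0, ih n le_rfl, if_pos rfl]
        simp [Nat.choose_succ_self_right]
        ring
      rw [hls]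
      rw [if_pos rfl]
      push_cast [Nat.factorial_succ]
      ring

theorem stmt19 (n j : ℕ) (hj : j ≤ n) (x : ℝ) :
    ∑ i ∈ Finset.range (n+1), (-1:ℝ)^i * (n.choose i) * (x - i)^j
      = if j = n then (n.factorial : ℝ) else 0 := by
  have hexp : ∀ i : ℕ, (x - (i:ℝ))^j
      = ∑ k ∈ Finset.range (j+1), x^k * ((-1:ℝ)^(j-k) * (i:ℝ)^(j-k) * (j.choose k : ℝ)) := by
    intro i
    rw [sub_eq_add_neg, add_pow]
    refine Finset.sum_congr rfl fun k _ => ?_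
    rw [neg_pow]
    ring
  calc ∑ i ∈ Finset.range (n+1), (-1:ℝ)^i * (n.choose i) * (x - i)^j
      = ∑ i ∈ Finset.range (n+1), ∑ k ∈ Finset.range (j+1),
          (-1:ℝ)^i * (n.choose i) * (x^k * ((-1:ℝ)^(j-k) * (i:ℝ)^(j-k) * (j.choose k : ℝ))) := by
        refine Finset.sum_congr rfl fun i _ => ?_
        rw [hexp, Finset.mul_sum]
    _ = ∑ k ∈ Finset.range (j+1), ∑ i ∈ Finset.range (n+1),
          (-1:ℝ)^i * (n.choose i) * (x^k * ((-1:ℝ)^(j-k) * (i:ℝ)^(j-k) * (j.choose k : ℝ))) :=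
        Finset.sum_comm
    _ = ∑ k ∈ Finset.range (j+1), x^k * ((-1:ℝ)^(j-k) * (j.choose k : ℝ))
          * ∑ i ∈ Finset.range (n+1), (-1:ℝ)^i * (n.choose i) * (i:ℝ)^(j-k) := by
        refine Finset.sum_congr rfl fun k _ => ?_
        rw [Finset.mul_sum]
        refine Finset.sum_congr rfl fun i _ => ?_
        ring
    _ = if j = n then (n.factorial : ℝ) else 0 := by
        rw [Finset.sum_congr rfl fun k _ => by
          rw [auxT n (j-k) (le_trans (Nat.sub_le j k) hj)]]
        by_cases h : j = n
        · subst h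
          rw [if_pos rfl, Finset.sum_eq_single 0]
          · have h2 : ((-1:ℝ)^j)*((-1:ℝ)^j) = 1 := by
              rw [← pow_add, ← two_mul, pow_mul, neg_one_sq, one_pow]
            simp [h2, ← mul_assoc]
          · intro k hk hk0
            have hk' := Finset.mem_range.mp hk
            have : j - k ≠ j := by omega
            rw [if_neg this, mul_zero]
          · intro h0; exact absurd (Finset.mem_range.mpr (Nat.succ_pos j)) h0
        · rw [if_neg h, Finset.sum_eq_zero]
          intro k hk
          have hk' := Finset.mem_range.mp hk
          have : j - k ≠ n := by omega
          rw [if_neg this, mul_zero]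
end
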